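/- Let 1 ≤ p ≤ p̃ ≤ 2 and d/p − d/p̃ < a. Then the embedding b⁰_{p,1} ⊆ b^{−a}_{p̃,1} of sequence Besov spaces is compact (it is the norm limit of the finite-rank truncation operators z ↦ (z_{j,k})_{j≤N}). -/

import Mathlib

/-!
With `δ = a - (d/p - d/p̃) > 0`, the weight of `b^{-a}_{p̃,1}` on level `j` is `2^{-jδ}` times
that of `b⁰_{p,1}`, and the `ℓ^p̃` norm of a finite block is at most its `ℓ^p` norm. So the levels
`j ≥ N` of any `z` in the unit ball of `b⁰_{p,1}` contribute at most `ε/2` to the `b^{-a}_{p̃,1}`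
norm once `N` is large. The first `N` levels of the unit ball form a bounded set in a
finite-dimensional space; a fine enough net of it, extended by zero, is an `ε`-net of the ball.
-/

open Real ENNReal

/-- ℓ^p norm on a finite block for p ∈ [1,∞], valued in ℝ≥0∞. -/
noncomputable def blockNormE {Λ : Type*} [Fintype Λ] (p : ℝ≥0∞) (v : Λ → ℝ) : ℝ≥0∞ :=
  if p = ∞ then Finset.univ.sup (fun k => (‖v k‖₊ : ℝ≥0∞))
  else (∑ k, (‖v k‖₊ : ℝ≥0∞) ^ p.toReal) ^ (1 / p.toReal)

/-- ℓ^q norm of a sequence in ℝ≥0∞, q ∈ [1,∞]. -/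
noncomputable def lqNormE (q : ℝ≥0∞) (x : ℕ → ℝ≥0∞) : ℝ≥0∞ :=
  if q = ∞ then ⨆ j, x j else (∑' j, x j ^ q.toReal) ^ (1 / q.toReal)

/-- weight 2^{js} 2^{jd(1/2 − 1/p)} (with the convention 1/∞ = 0). -/
noncomputable def wtE (d : ℕ) (s : ℝ) (p : ℝ≥0∞) (j : ℕ) : ℝ≥0∞ :=
  ENNReal.ofReal ((2:ℝ) ^ ((j:ℝ) * s) * (2:ℝ) ^ ((j:ℝ) * d * (1 / 2 - 1 / p.toReal)))

/-- sequence Besov norm ‖z‖_{b^s_{p,q}}. -/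
noncomputable def besovNormE {Λ : ℕ → Type*} [∀ j, Fintype (Λ j)]
    (d : ℕ) (s : ℝ) (p q : ℝ≥0∞) (z : ∀ j, Λ j → ℝ) : ℝ≥0∞ :=
  lqNormE q (fun j => wtE d s p j * blockNormE p (z j))

open Finset Filter

namespace ENNReal

variable {ι : Type*}

theorem rpow_sum_rpow_le_sum (s : Finset ι) (g : ι → ℝ≥0∞) {r : ℝ} (hr : 1 ≤ r) :
    (∑ i ∈ s, g i ^ r) ^ (1 / r) ≤ ∑ i ∈ s, g i := by
  classical
  have hr0 : 0 < r := zero_lt_one.trans_le hr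
  induction s using Finset.induction_on with
  | empty => simp [hr0]
  | insert a s ha ih =>
    rw [sum_insert ha, sum_insert ha]
    calc (g a ^ r + ∑ i ∈ s, g i ^ r) ^ (1 / r)
        = (g a ^ r + ((∑ i ∈ s, g i ^ r) ^ (1 / r)) ^ r) ^ (1 / r) := by
          rw [← rpow_mul, one_div_mul_cancel hr0.ne', rpow_one]
      _ ≤ g a + (∑ i ∈ s, g i ^ r) ^ (1 / r) := rpow_add_rpow_le_add _ _ hr
      _ ≤ g a + ∑ i ∈ s, g i := by gcongr

theorem rpow_sum_rpow_le (s : Finset ι) (f : ι → ℝ≥0∞) {p q : ℝ} (hp : 0 < p) (hpq : p ≤ q) :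
    (∑ i ∈ s, f i ^ q) ^ (1 / q) ≤ (∑ i ∈ s, f i ^ p) ^ (1 / p) := by
  have hq : 0 < q := hp.trans_le hpq
  have h := rpow_sum_rpow_le_sum s (fun i => f i ^ p) ((one_le_div hp).mpr hpq)
  simp only [← rpow_mul, mul_div_cancel₀ _ hp.ne'] at h
  calc (∑ i ∈ s, f i ^ q) ^ (1 / q)
      = ((∑ i ∈ s, f i ^ q) ^ (1 / (q / p))) ^ (1 / p) := by
        rw [← rpow_mul]; congr 1; field_simp
    _ ≤ (∑ i ∈ s, f i ^ p) ^ (1 / p) := by gcongr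

end ENNReal

section BlockNorm

variable {ι : Type*} [Fintype ι] {p q : ℝ≥0∞}

theorem coe_nnnorm_le_blockNormE (hp : p ≠ 0) (v : ι → ℝ) (k : ι) :
    (‖v k‖₊ : ℝ≥0∞) ≤ blockNormE p v := by
  rw [blockNormE]
  split_ifs with hp_top
  · exact le_sup (f := fun k => (‖v k‖₊ : ℝ≥0∞)) (mem_univ k)
  · have hp0 : 0 < p.toReal := toReal_pos hp hp_top
    calc (‖v k‖₊ : ℝ≥0∞) = ((‖v k‖₊ : ℝ≥0∞) ^ p.toReal) ^ (1 / p.toReal) := by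
          rw [← ENNReal.rpow_mul, mul_one_div_cancel hp0.ne', ENNReal.rpow_one]
      _ ≤ (∑ k, (‖v k‖₊ : ℝ≥0∞) ^ p.toReal) ^ (1 / p.toReal) := by
          gcongr
          exact single_le_sum (f := fun k => (‖v k‖₊ : ℝ≥0∞) ^ p.toReal)
            (fun _ _ => zero_le) (mem_univ k)

theorem blockNormE_le_of_exponent_le (hp : p ≠ 0) (hpq : p ≤ q) (v : ι → ℝ) :
    blockNormE q v ≤ blockNormE p v := by
  by_cases hq_top : q = ∞
  · rw [blockNormE, if_pos hq_top]
    exact Finset.sup_le fun k _ => coe_nnnorm_le_blockNormE hp v k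
  have hp_top : p ≠ ∞ := ne_top_of_le_ne_top hq_top hpq
  rw [blockNormE, blockNormE, if_neg hq_top, if_neg hp_top]
  exact rpow_sum_rpow_le _ _ (toReal_pos hp hp_top) (toReal_mono hq_top hpq)

theorem blockNormE_le_card_rpow_mul (hp : p ≠ 0) {v : ι → ℝ} {c : ℝ≥0∞}
    (hv : ∀ k, (‖v k‖₊ : ℝ≥0∞) ≤ c) :
    blockNormE p v ≤ (Fintype.card ι : ℝ≥0∞) ^ (1 / p.toReal) * c := by
  rw [blockNormE]
  split_ifs with hp_top
  · simp only [hp_top, toReal_top, _root_.div_zero, ENNReal.rpow_zero, one_mul]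
    exact Finset.sup_le fun k _ => hv k
  · have hp0 : 0 < p.toReal := toReal_pos hp hp_top
    calc (∑ k, (‖v k‖₊ : ℝ≥0∞) ^ p.toReal) ^ (1 / p.toReal)
        ≤ (∑ _k : ι, c ^ p.toReal) ^ (1 / p.toReal) := by gcongr with k; exact hv k
      _ = (Fintype.card ι : ℝ≥0∞) ^ (1 / p.toReal) * c := by
          rw [sum_const, card_univ, nsmul_eq_mul, mul_rpow_of_nonneg _ _ (by positivity),
            ← ENNReal.rpow_mul, mul_one_div_cancel hp0.ne', ENNReal.rpow_one]

end BlockNorm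

theorem wtE_ne_zero (d : ℕ) (s : ℝ) (p : ℝ≥0∞) (j : ℕ) : wtE d s p j ≠ 0 := by
  rw [wtE, ne_eq, ofReal_eq_zero, not_le]
  positivity

theorem wtE_eq_pow_mul (d : ℕ) (s t : ℝ) (p q : ℝ≥0∞) (j : ℕ) :
    wtE d t q j =
      ENNReal.ofReal (2 ^ (-(s - t - (d / p.toReal - d / q.toReal)))) ^ j * wtE d s p j := by
  rw [wtE, wtE, ← ofReal_pow (by positivity), ← ofReal_mul (by positivity),
    ← Real.rpow_natCast, ← Real.rpow_mul zero_le_two]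
  simp only [← Real.rpow_add zero_lt_two]
  congr 2
  ring

theorem eventually_wtE_le_mul {d : ℕ} {s t : ℝ} {p q : ℝ≥0∞}
    (h : d / p.toReal - d / q.toReal < s - t) {ε : ℝ≥0∞}
    (hε : 0 < ε) : ∀ᶠ j in atTop, wtE d t q j ≤ ε * wtE d s p j := by
  set r := ENNReal.ofReal (2 ^ (-(s - t - (d / p.toReal - d / q.toReal))))
  have hr : r < 1 := by
    rw [← ofReal_one, ofReal_lt_ofReal_iff one_pos]
    exact Real.rpow_lt_one_of_one_lt_of_neg one_lt_two (by linarith)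
  filter_upwards [(ENNReal.tendsto_pow_atTop_nhds_zero_of_lt_one hr).eventually
    (Iic_mem_nhds hε)] with j hj
  rw [wtE_eq_pow_mul d s t p q j]
  exact mul_le_mul_left hj _

section Besov

variable {Λ : ℕ → Type*} [∀ j, Fintype (Λ j)] {d : ℕ} {s : ℝ} {p : ℝ≥0∞}

theorem besovNormE_one (d : ℕ) (s : ℝ) (p : ℝ≥0∞) (z : ∀ j, Λ j → ℝ) :
    besovNormE d s p 1 z = ∑' j, wtE d s p j * blockNormE p (z j) := by
  simp [besovNormE, lqNormE]

theorem coe_nnnorm_le_inv_wtE (hp : p ≠ 0) {z : ∀ j, Λ j → ℝ} (hz : besovNormE d s p 1 z ≤ 1)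
    (j : ℕ) (k : Λ j) : (‖z j k‖₊ : ℝ≥0∞) ≤ (wtE d s p j)⁻¹ := by
  rw [ENNReal.le_inv_iff_mul_le, mul_comm]
  calc wtE d s p j * ‖z j k‖₊ ≤ wtE d s p j * blockNormE p (z j) := by
        gcongr; exact coe_nnnorm_le_blockNormE hp _ k
    _ ≤ ∑' j, wtE d s p j * blockNormE p (z j) := ENNReal.le_tsum j
    _ ≤ 1 := besovNormE_one d s p z ▸ hz

theorem totallyBounded_image_restrict_of_besovNormE_le_one (hp : p ≠ 0) (N : ℕ) :
    TotallyBounded ((fun z (j : Fin N) => z j) ''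
      {z : ∀ j, Λ j → ℝ | besovNormE d s p 1 z ≤ 1}) := by
  refine (isCompact_univ_pi fun j : Fin N => isCompact_univ_pi fun _ : Λ j =>
    isCompact_closedBall (0 : ℝ) (wtE d s p j)⁻¹.toReal).totallyBounded.subset ?_
  rintro _ ⟨z, hz, rfl⟩ j - k -
  rw [mem_closedBall_zero_iff, ← ofReal_le_iff_le_toReal (inv_ne_top.mpr (wtE_ne_zero d s p j)),
    ofReal_norm]
  exact coe_nnnorm_le_inv_wtE hp hz j k

end Besov

section Truncation

variable {Λ : ℕ → Type*} {d : ℕ} {s t : ℝ} {p q : ℝ≥0∞}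

def extendByZero (N : ℕ) (y : ∀ j : Fin N, Λ j → ℝ) : ∀ j, Λ j → ℝ :=
  fun j => if h : j < N then y ⟨j, h⟩ else 0

theorem coe_nnnorm_sub_extendByZero_le [∀ j, Fintype (Λ j)] {N : ℕ} {z : ∀ j, Λ j → ℝ}
    {y : ∀ j : Fin N, Λ j → ℝ} {η : ℝ≥0∞} (h : edist (fun j : Fin N => z j) y < η) {j : ℕ}
    (hj : j < N) (k : Λ j) :
    (‖(z - extendByZero N y) j k‖₊ : ℝ≥0∞) ≤ η := by
  have hzy : (z - extendByZero N y) j k = z j k - y ⟨j, hj⟩ k := by simp [extendByZero, hj]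
  rw [hzy, ← enorm_eq_nnnorm, ← edist_eq_enorm_sub]
  exact ((edist_le_pi_edist _ _ k).trans
    (edist_le_pi_edist (fun j : Fin N => z j) y ⟨j, hj⟩)).trans h.le

theorem sub_extendByZero_of_le {N : ℕ} (z : ∀ j, Λ j → ℝ) (y : ∀ j : Fin N, Λ j → ℝ) {j : ℕ}
    (hj : N ≤ j) : (z - extendByZero N y) j = z j := by
  simp [extendByZero, hj.not_gt]

theorem sum_range_wtE_mul_blockNormE_le [∀ j, Fintype (Λ j)] (hq : q ≠ 0) (N : ℕ)
    {x : ∀ j, Λ j → ℝ} {η : ℝ≥0∞} (hx : ∀ j < N, ∀ k, (‖x j k‖₊ : ℝ≥0∞) ≤ η) :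
    ∑ j ∈ range N, wtE d t q j * blockNormE q (x j)
      ≤ (∑ j ∈ range N, wtE d t q j * (Fintype.card (Λ j) : ℝ≥0∞) ^ (1 / q.toReal)) * η := by
  rw [sum_mul]
  refine sum_le_sum fun j hj => ?_
  rw [mul_assoc]
  gcongr wtE d t q j * ?_
  exact blockNormE_le_card_rpow_mul hq (hx j (mem_range.mp hj))

theorem tsum_wtE_mul_blockNormE_nat_add_le [∀ j, Fintype (Λ j)] (hp : p ≠ 0) (hpq : p ≤ q)
    {N : ℕ} {c : ℝ≥0∞} (hN : ∀ j ≥ N, wtE d t q j ≤ c * wtE d s p j) (z : ∀ j, Λ j → ℝ) :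
    ∑' i, wtE d t q (i + N) * blockNormE q (z (i + N)) ≤ c * besovNormE d s p 1 z := by
  rw [besovNormE_one, ← ENNReal.tsum_mul_left]
  calc ∑' i, wtE d t q (i + N) * blockNormE q (z (i + N))
      ≤ ∑' i, c * (wtE d s p (i + N) * blockNormE p (z (i + N))) := by
        refine ENNReal.tsum_le_tsum fun i => ?_
        rw [← mul_assoc]
        exact mul_le_mul' (hN _ (Nat.le_add_left N i)) (blockNormE_le_of_exponent_le hp hpq _)
    _ ≤ ∑' j, c * (wtE d s p j * blockNormE p (z j)) :=
        ENNReal.tsum_comp_le_tsum_of_injective (add_left_injective N)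
          fun j => c * (wtE d s p j * blockNormE p (z j))

end Truncation

theorem stmt13_general {Λ : ℕ → Type*} [∀ j, Fintype (Λ j)]
    (d : ℕ) (p p' : ℝ≥0∞) (a : ℝ) (hp1 : 1 ≤ p) (hpp' : p ≤ p')
    (ha : (d : ℝ) / p.toReal - (d : ℝ) / p'.toReal < a) :
    ∀ ε : ℝ≥0∞, 0 < ε → ∃ S : Finset (∀ j, Λ j → ℝ),
      ∀ z : ∀ j, Λ j → ℝ, besovNormE d 0 p 1 z ≤ 1 →
        ∃ w ∈ S, besovNormE d (-a) p' 1 (z - w) ≤ ε := by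
  classical
  intro ε hε
  have hp : p ≠ 0 := (zero_lt_one.trans_le hp1).ne'
  have hε2 : 0 < ε / 2 := ENNReal.half_pos hε.ne'
  obtain ⟨N, hN⟩ := (eventually_wtE_le_mul (d := d) (s := 0) (t := -a) (p := p) (q := p')
    (by linarith) hε2).exists_forall_of_atTop
  set K := ∑ j ∈ range N, wtE d (-a) p' j * (Fintype.card (Λ j) : ℝ≥0∞) ^ (1 / p'.toReal)
  have hK : K ≠ ∞ := sum_ne_top.mpr fun j _ =>
    mul_ne_top ofReal_ne_top (rpow_ne_top_of_nonneg (by positivity) (natCast_ne_top _))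
  obtain ⟨net, hnet, hcover⟩ := EMetric.totallyBounded_iff.mp
    (totallyBounded_image_restrict_of_besovNormE_le_one (Λ := Λ) (d := d) (s := 0) hp N)
    (ε / 2 / K) (ENNReal.div_pos_iff.mpr ⟨hε2.ne', hK⟩)
  refine ⟨hnet.toFinset.image (extendByZero N), fun z hz => ?_⟩
  obtain ⟨y, hy, hzy⟩ := Set.mem_iUnion₂.mp (hcover ⟨z, hz, rfl⟩)
  refine ⟨extendByZero N y, mem_image_of_mem _ (hnet.mem_toFinset.mpr hy), ?_⟩
  rw [besovNormE_one, ← ENNReal.summable.sum_add_tsum_nat_add' (k := N)]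
  have hhead := sum_range_wtE_mul_blockNormE_le (d := d) (t := -a)
    (hp.bot_lt.trans_le hpp').ne' N fun j hj k => coe_nnnorm_sub_extendByZero_le hzy hj k
  have htail := tsum_wtE_mul_blockNormE_nat_add_le hp hpp' hN z
  simp only [sub_extendByZero_of_le z y (Nat.le_add_left N _)]
  calc _ ≤ K * (ε / 2 / K) + ε / 2 * besovNormE d 0 p 1 z := add_le_add hhead htail
    _ ≤ ε / 2 + ε / 2 * 1 := by gcongr; exact ENNReal.mul_div_le
    _ = ε := by rw [mul_one, ENNReal.add_halves]

/-- the embedding b⁰_{p,1} ⊆ b^{−a}_{p̃,1} is compact whenever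
d/p − d/p̃ < a (formulated as total boundedness of the image of the unit ball). -/
theorem stmt13 {Λ : ℕ → Type*} [∀ j, Fintype (Λ j)]
    (d : ℕ) (hd : 1 ≤ d) (CΛ : ℝ) (hCΛ : 1 ≤ CΛ)
    (hcard : ∀ j : ℕ, 2 ^ (j * d) ≤ Fintype.card (Λ j) ∧
      (Fintype.card (Λ j) : ℝ) ≤ CΛ * 2 ^ (j * d))
    (p p' : ℝ≥0∞) (a : ℝ) (hp1 : 1 ≤ p) (hpp' : p ≤ p') (hp'2 : p' ≤ 2)
    (ha : (d : ℝ) / p.toReal - (d : ℝ) / p'.toReal < a) :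
    ∀ ε : ℝ≥0∞, 0 < ε → ∃ S : Finset (∀ j, Λ j → ℝ),
      ∀ z : ∀ j, Λ j → ℝ, besovNormE d 0 p 1 z ≤ 1 →
        ∃ w ∈ S, besovNormE d (-a) p' 1 (z - w) ≤ ε :=
  stmt13_general d p p' a hp1 hpp' ha
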